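/- If some maximizer p* of conditional entropy over 𝒟 has full-support X-marginal (p*(x) > 0 for all x ∈ 𝒳), then the posterior q(y|x) = p*(x,y)/p*(x) is an optimal minimax-robust decision rule: it achieves max_q loss at most h* = max_{p∈𝒟} H_p(Y|X) against every p ∈ 𝒟. -/

import Mathlib

open scoped BigOperators

variable {𝒳 𝒴 : Type*}

/-- `p` is a probability distribution on `𝒳 × 𝒴`. -/
def IsDist [Fintype 𝒳] [Fintype 𝒴] (p : 𝒳 × 𝒴 → ℝ) : Prop :=
  (∀ a, 0 ≤ p a) ∧ ∑ a, p a = 1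

/-- `q` is a conditional distribution (stochastic matrix) from `𝒳` to `𝒴`. -/
def IsCond [Fintype 𝒴] (q : 𝒳 → 𝒴 → ℝ) : Prop :=
  (∀ x y, 0 ≤ q x y) ∧ ∀ x, ∑ y, q x y = 1

/-- Marginal of `X`. -/
noncomputable def margX [Fintype 𝒴] (p : 𝒳 × 𝒴 → ℝ) (x : 𝒳) : ℝ := ∑ y, p (x, y)

/-- Conditional entropy `H_p(Y|X)` (natural log, `0 log 0 = 0`). -/
noncomputable def condEnt [Fintype 𝒳] [Fintype 𝒴] (p : 𝒳 × 𝒴 → ℝ) : ℝ :=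
  -∑ a, p a * Real.log (p a / margX p a.1)

/-- Expected cross-entropy loss `E_p[-log q(Y|X)]`, valued in `EReal` with value `⊤`
when `q(y|x) = 0` while `p(x,y) > 0`. -/
noncomputable def CEE [Fintype 𝒳] [Fintype 𝒴] (p : 𝒳 × 𝒴 → ℝ) (q : 𝒳 → 𝒴 → ℝ) : EReal :=
  ∑ a, if q a.1 a.2 = 0 ∧ 0 < p a then (⊤ : EReal)
       else ((p a * (-Real.log (q a.1 a.2)) : ℝ) : EReal)
/-!
Perturb the maximizer toward `p ∈ 𝒟`: `m_t = (1 - t) p* + t p` stays in `𝒟`, and since the loss is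
linear in the distribution, `H(m_t) = (1 - t) L(p*, q_t) + t L(p, q_t)` with `q_t` the posterior of
`m_t`. Gibbs' inequality gives `L(p*, q_t) ≥ H(p*)`, and maximality `H(m_t) ≤ H(p*)`, hence
`L(p, q_t) ≤ H(p*)` for every `t ∈ (0, 1)`. As `t → 0⁺` these bounds force `p ≪ p*` (otherwise one
term of the loss blows up), after which the bound passes to the limit
`L(p, q_0) ≤ H(p*)`.
-/

open Filter Topology

lemma EReal.coe_finset_sum {ι : Type*} (s : Finset ι) (f : ι → ℝ) :
    ((∑ i ∈ s, f i : ℝ) : EReal) = ∑ i ∈ s, (f i : EReal) :=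
  map_sum (⟨⟨Real.toEReal, EReal.coe_zero⟩, EReal.coe_add⟩ : ℝ →+ EReal) f s

lemma mix_nonneg {pstar p : 𝒳 × 𝒴 → ℝ} {t : ℝ} (hs : ∀ a, 0 ≤ pstar a) (hp : ∀ a, 0 ≤ p a)
    (ht0 : 0 ≤ t) (ht1 : t ≤ 1) (a : 𝒳 × 𝒴) : 0 ≤ ((1 - t) • pstar + t • p) a :=
  add_nonneg (mul_nonneg (sub_nonneg.mpr ht1) (hs a)) (mul_nonneg ht0 (hp a))

section

variable [Fintype 𝒴]

noncomputable def posterior (p : 𝒳 × 𝒴 → ℝ) : 𝒳 → 𝒴 → ℝ := fun x y => p (x, y) / margX p x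

lemma margX_add (p p' : 𝒳 × 𝒴 → ℝ) (x : 𝒳) : margX (p + p') x = margX p x + margX p' x :=
  Finset.sum_add_distrib

lemma margX_smul (c : ℝ) (p : 𝒳 × 𝒴 → ℝ) (x : 𝒳) : margX (c • p) x = c * margX p x :=
  (Finset.mul_sum _ _ _).symm

lemma le_margX {p : 𝒳 × 𝒴 → ℝ} (hp : ∀ a, 0 ≤ p a) (a : 𝒳 × 𝒴) : p a ≤ margX p a.1 :=
  Finset.single_le_sum (f := fun y => p (a.1, y)) (fun _ _ => hp _) (Finset.mem_univ a.2)

lemma isCond_posterior {p : 𝒳 × 𝒴 → ℝ} (hp : ∀ a, 0 ≤ p a) (hm : ∀ x, 0 < margX p x) :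
    IsCond (posterior p) :=
  ⟨fun x y => div_nonneg (hp _) (hm x).le,
    fun x => by simp only [posterior, ← Finset.sum_div]; exact div_self (hm x).ne'⟩

lemma margX_mix_pos {pstar p : 𝒳 × 𝒴 → ℝ} {t : ℝ} (hp : ∀ a, 0 ≤ p a)
    (hsupp : ∀ x, 0 < margX pstar x) (ht0 : 0 ≤ t) (ht1 : t < 1) (x : 𝒳) :
    0 < margX ((1 - t) • pstar + t • p) x := by
  rw [margX_add, margX_smul, margX_smul]
  exact add_pos_of_pos_of_nonneg (mul_pos (sub_pos.mpr ht1) (hsupp x))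
    (mul_nonneg ht0 (Finset.sum_nonneg fun y _ => hp (x, y)))

lemma tendsto_posterior_mix (pstar p : 𝒳 × 𝒴 → ℝ) (x : 𝒳) (y : 𝒴) (hx : margX pstar x ≠ 0) :
    Tendsto (fun t : ℝ => posterior ((1 - t) • pstar + t • p) x y) (𝓝 0)
      (𝓝 (posterior pstar x y)) := by
  simp only [posterior, margX_add, margX_smul, Pi.add_apply, Pi.smul_apply, smul_eq_mul]
  have hnum : Continuous fun t : ℝ => (1 - t) * pstar (x, y) + t * p (x, y) := by fun_prop
  have hden : Continuous fun t : ℝ => (1 - t) * margX pstar x + t * margX p x := by fun_prop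
  have h := (hnum.tendsto 0).div (hden.tendsto 0) (by simpa using hx)
  simp only [sub_zero, one_mul, zero_mul, add_zero] at h
  exact h

variable [Fintype 𝒳]

noncomputable def loss (p : 𝒳 × 𝒴 → ℝ) (q : 𝒳 → 𝒴 → ℝ) : ℝ := ∑ a, p a * -Real.log (q a.1 a.2)

lemma condEnt_eq_loss_posterior (p : 𝒳 × 𝒴 → ℝ) : condEnt p = loss p (posterior p) := by
  simp only [condEnt, loss, posterior, mul_neg, Finset.sum_neg_distrib]

lemma loss_add (p p' : 𝒳 × 𝒴 → ℝ) (q : 𝒳 → 𝒴 → ℝ) :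
    loss (p + p') q = loss p q + loss p' q := by
  simp only [loss, Pi.add_apply, add_mul, Finset.sum_add_distrib]

lemma loss_smul (c : ℝ) (p : 𝒳 × 𝒴 → ℝ) (q : 𝒳 → 𝒴 → ℝ) : loss (c • p) q = c * loss p q := by
  simp only [loss, Pi.smul_apply, smul_eq_mul, mul_assoc, Finset.mul_sum]

lemma mul_neg_log_le_loss {p : 𝒳 × 𝒴 → ℝ} (hp : ∀ a, 0 ≤ p a) {q : 𝒳 → 𝒴 → ℝ} (hq : IsCond q)
    (a : 𝒳 × 𝒴) : p a * -Real.log (q a.1 a.2) ≤ loss p q := by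
  have hq_le_one (b : 𝒳 × 𝒴) : q b.1 b.2 ≤ 1 := by
    rw [← hq.2 b.1]
    exact Finset.single_le_sum (fun y _ => hq.1 b.1 y) (Finset.mem_univ b.2)
  exact Finset.single_le_sum (f := fun b => p b * -Real.log (q b.1 b.2))
    (fun b _ => mul_nonneg (hp b) (neg_nonneg.mpr (Real.log_nonpos (hq.1 _ _) (hq_le_one b))))
    (Finset.mem_univ a)

lemma condEnt_le_loss {p : 𝒳 × 𝒴 → ℝ} (hp : ∀ a, 0 ≤ p a) {q : 𝒳 → 𝒴 → ℝ} (hq : IsCond q)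
    (hpq : ∀ a, 0 < p a → 0 < q a.1 a.2) : condEnt p ≤ loss p q := by
  -- termwise `log u ≤ u - 1` with `u = q(y|x) p(x) / p(x,y)`; the error terms sum to zero
  have key (a : 𝒳 × 𝒴) : p a * -Real.log (posterior p a.1 a.2)
      ≤ p a * -Real.log (q a.1 a.2) + (q a.1 a.2 * margX p a.1 - p a) := by
    rcases (hp a).eq_or_lt with h0 | h0
    · rw [← h0]; nlinarith [hq.1 a.1 a.2, le_margX hp a]
    · have hm : 0 < margX p a.1 := h0.trans_le (le_margX hp a)
      have hqa := hpq a h0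
      have hlog := Real.log_le_sub_one_of_pos (by positivity : 0 < q a.1 a.2 * margX p a.1 / p a)
      rw [Real.log_div (by positivity) h0.ne', Real.log_mul hqa.ne' hm.ne'] at hlog
      rw [posterior, Real.log_div h0.ne' hm.ne']
      have hscaled : p a * (q a.1 a.2 * margX p a.1 / p a - 1) = q a.1 a.2 * margX p a.1 - p a := by
        field_simp
      nlinarith [mul_le_mul_of_nonneg_left hlog h0.le]
  have herr : ∑ a : 𝒳 × 𝒴, (q a.1 a.2 * margX p a.1 - p a) = 0 := by
    rw [Finset.sum_sub_distrib, Fintype.sum_prod_type, Fintype.sum_prod_type, sub_eq_zero]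
    refine Finset.sum_congr rfl fun x _ => ?_
    dsimp only
    rw [← Finset.sum_mul, hq.2 x, one_mul, margX]
  calc condEnt p = ∑ a, p a * -Real.log (posterior p a.1 a.2) := condEnt_eq_loss_posterior p
    _ ≤ ∑ a, (p a * -Real.log (q a.1 a.2) + (q a.1 a.2 * margX p a.1 - p a)) :=
      Finset.sum_le_sum fun a _ => key a
    _ = loss p q := by rw [Finset.sum_add_distrib, herr, add_zero, loss]

lemma CEE_eq_loss {p : 𝒳 × 𝒴 → ℝ} {q : 𝒳 → 𝒴 → ℝ} (hpq : ∀ a, 0 < p a → q a.1 a.2 ≠ 0) :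
    CEE p q = loss p q := by
  rw [CEE, loss, EReal.coe_finset_sum]
  exact Finset.sum_congr rfl fun a _ => if_neg fun h => hpq a h.2 h.1

variable {pstar p : 𝒳 × 𝒴 → ℝ}

lemma loss_posterior_mix_le {D : Set (𝒳 × 𝒴 → ℝ)} (hconv : Convex ℝ D) (hmem : pstar ∈ D)
    (hmax : ∀ r ∈ D, condEnt r ≤ condEnt pstar) (hs : ∀ a, 0 ≤ pstar a)
    (hsupp : ∀ x, 0 < margX pstar x) (hpD : p ∈ D) (hp : ∀ a, 0 ≤ p a) {t : ℝ} (ht0 : 0 < t)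
    (ht1 : t < 1) : loss p (posterior ((1 - t) • pstar + t • p)) ≤ condEnt pstar := by
  set m := (1 - t) • pstar + t • p
  have hmD : m ∈ D := hconv hmem hpD (by linarith) ht0.le (by ring)
  have hq : IsCond (posterior m) :=
    isCond_posterior (mix_nonneg hs hp ht0.le ht1.le) (margX_mix_pos hp hsupp ht0.le ht1)
  have hgibbs : condEnt pstar ≤ loss pstar (posterior m) := by
    refine condEnt_le_loss hs hq fun a ha => div_pos ?_ (margX_mix_pos hp hsupp ht0.le ht1 _)
    exact add_pos_of_pos_of_nonneg (mul_pos (sub_pos.mpr ht1) ha) (mul_nonneg ht0.le (hp a))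
  have hsplit : condEnt m = (1 - t) * loss pstar (posterior m) + t * loss p (posterior m) := by
    rw [condEnt_eq_loss_posterior, loss_add, loss_smul, loss_smul]
  have hle : t * loss p (posterior m) ≤ t * condEnt pstar := by
    nlinarith [hmax m hmD]
  exact le_of_mul_le_mul_left hle ht0

lemma eq_zero_of_eventually_loss_posterior_mix_le (hs : ∀ a, 0 ≤ pstar a) (hp : ∀ a, 0 ≤ p a)
    (hsupp : ∀ x, 0 < margX pstar x) {H : ℝ}
    (hbound : ∀ᶠ t in 𝓝[>] (0 : ℝ), loss p (posterior ((1 - t) • pstar + t • p)) ≤ H)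
    (a : 𝒳 × 𝒴) (hsa : pstar a = 0) : p a = 0 := by
  by_contra hpa
  replace hpa : 0 < p a := (hp a).lt_of_ne' hpa
  set q : ℝ → ℝ := fun t => posterior ((1 - t) • pstar + t • p) a.1 a.2
  -- with `p*(a) = 0` the posterior at `a` is `t p(a) / (…)`, whose log loss blows up as `t → 0⁺`
  have hq_pos : ∀ᶠ t in 𝓝[>] (0 : ℝ), q t ∈ Set.Ioi 0 := by
    filter_upwards [Ioo_mem_nhdsGT one_pos] with t ht
    refine div_pos ?_ (margX_mix_pos hp hsupp ht.1.le ht.2 _)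
    simpa [hsa] using mul_pos ht.1 hpa
  have hq : Tendsto q (𝓝[>] (0 : ℝ)) (𝓝[>] (0 : ℝ)) := by
    have hlim := tendsto_posterior_mix pstar p a.1 a.2 (hsupp a.1).ne'
    rw [posterior, hsa, zero_div] at hlim
    exact tendsto_nhdsWithin_of_tendsto_nhds_of_eventually_within _
      (hlim.mono_left nhdsWithin_le_nhds) hq_pos
  have hblow : Tendsto (fun t => p a * -Real.log (q t)) (𝓝[>] (0 : ℝ)) atTop :=
    (tendsto_neg_atBot_atTop.comp (Real.tendsto_log_nhdsGT_zero.comp hq)).const_mul_atTop hpa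
  obtain ⟨t, hbig, hle, ht⟩ :=
    ((hblow.eventually_gt_atTop H).and (hbound.and (Ioo_mem_nhdsGT one_pos))).exists
  have hterm := mul_neg_log_le_loss hp (isCond_posterior
    (mix_nonneg hs hp ht.1.le ht.2.le) (margX_mix_pos hp hsupp ht.1.le ht.2)) a
  linarith

lemma loss_posterior_le_of_eventually_mix_le (hsupp : ∀ x, 0 < margX pstar x)
    (hac : ∀ a, pstar a = 0 → p a = 0) {H : ℝ}
    (hbound : ∀ᶠ t in 𝓝[>] (0 : ℝ), loss p (posterior ((1 - t) • pstar + t • p)) ≤ H) :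
    loss p (posterior pstar) ≤ H := by
  refine le_of_tendsto (tendsto_finsetSum _ fun a _ => ?_) hbound
  by_cases hsa : pstar a = 0
  · simp [hac a hsa]
  have hq : posterior pstar a.1 a.2 ≠ 0 := div_ne_zero hsa (hsupp a.1).ne'
  exact ((((tendsto_posterior_mix pstar p a.1 a.2 (hsupp a.1).ne').mono_left
    nhdsWithin_le_nhds).log hq).neg).const_mul (p a)

end

theorem full_support_maximizer_posterior_is_robust_general [Fintype 𝒳] [Fintype 𝒴]
    (𝒟 : Set (𝒳 × 𝒴 → ℝ)) (h𝒟 : ∀ p ∈ 𝒟, IsDist p)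
    (hconv : Convex ℝ 𝒟)
    (pstar : 𝒳 × 𝒴 → ℝ) (hmem : pstar ∈ 𝒟)
    (hmax : ∀ p ∈ 𝒟, condEnt p ≤ condEnt pstar)
    (hsupp : ∀ x, 0 < margX pstar x) :
    IsCond (fun x y => pstar (x, y) / margX pstar x) ∧
    ∀ p ∈ 𝒟, CEE p (fun x y => pstar (x, y) / margX pstar x)
      ≤ ((condEnt pstar : ℝ) : EReal) := by
  obtain ⟨hs, -⟩ := h𝒟 pstar hmem
  refine ⟨isCond_posterior hs hsupp, fun p hpD => ?_⟩
  obtain ⟨hp, -⟩ := h𝒟 p hpD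
  have hbound : ∀ᶠ t in 𝓝[>] (0 : ℝ),
      loss p (posterior ((1 - t) • pstar + t • p)) ≤ condEnt pstar := by
    filter_upwards [Ioo_mem_nhdsGT one_pos] with t ht
    exact loss_posterior_mix_le hconv hmem hmax hs hsupp hpD hp ht.1 ht.2
  have hac := eq_zero_of_eventually_loss_posterior_mix_le hs hp hsupp hbound
  calc CEE p (posterior pstar) = loss p (posterior pstar) :=
        CEE_eq_loss fun a hpa hq => hpa.ne' <| hac a <|
          (div_eq_zero_iff.mp hq).resolve_right (hsupp a.1).ne'
    _ ≤ condEnt pstar := EReal.coe_le_coe_iff.mpr <|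
        loss_posterior_le_of_eventually_mix_le hsupp hac hbound

/-- if a maximizer `p*` of conditional entropy over `𝒟` has full-support
`X`-marginal, then the posterior `q(y|x) = p*(x,y)/p*(x)` is an optimal minimax-robust
decision rule: it is a valid conditional distribution achieving loss at most
`h* = max_{p∈𝒟} H_p(Y|X) = H_{p*}(Y|X)` against every `p ∈ 𝒟`. -/
theorem full_support_maximizer_posterior_is_robust [Fintype 𝒳] [Fintype 𝒴]
    (𝒟 : Set (𝒳 × 𝒴 → ℝ)) (h𝒟 : ∀ p ∈ 𝒟, IsDist p)
    (hclosed : IsClosed 𝒟) (hconv : Convex ℝ 𝒟)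
    (pstar : 𝒳 × 𝒴 → ℝ) (hmem : pstar ∈ 𝒟)
    (hmax : ∀ p ∈ 𝒟, condEnt p ≤ condEnt pstar)
    (hsupp : ∀ x, 0 < margX pstar x) :
    IsCond (fun x y => pstar (x, y) / margX pstar x) ∧
    ∀ p ∈ 𝒟, CEE p (fun x y => pstar (x, y) / margX pstar x)
      ≤ ((condEnt pstar : ℝ) : EReal) :=
  full_support_maximizer_posterior_is_robust_general 𝒟 h𝒟 hconv pstar hmem hmax hsupp
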